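/- Let M₀, M₁ be symmetric positive-definite real n×n matrices with decompositions M₀ = C₀ᵀC₀ and M₁ = C₁ᵀC₁ (C₀, C₁ invertible). Let f : ℝⁿ → ℝⁿ be continuously differentiable (representing the time-t₁ solution map of the ODE x′ = F(t,x) started at time t₀), let x₀ ∈ ℝⁿ, δ₀ > 0, and let X = B_{M₀}(x₀, δ₀) be the closed ball of radius δ₀ about x₀ in the M₀-norm. Suppose D ⊂ ℝ^{n×n} is a set such that Df(x) ∈ D for all x ∈ X, and Λ > 0 satisfies Λ ≥ sqrt(λ_max((C₀ᵀ)⁻¹·Dᵀ·M₁·D·C₀⁻¹)) for all D ∈ D. Then for every x ∈ X, f(x) ∈ B_{M₁}(f(x₀), Λ·δ₀). -/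

import Mathlib

open Matrix

/-- Largest eigenvalue of a real matrix, as the supremum of its real spectrum. -/
noncomputable def lambdaMax {n : ℕ} (S : Matrix (Fin n) (Fin n) ℝ) : ℝ :=
  sSup (spectrum ℝ S)

/-- Weighted `M`-norm of a vector: `‖y‖_M = sqrt (yᵀ M y)`. -/
noncomputable def Mnorm {n : ℕ} (M : Matrix (Fin n) (Fin n) ℝ) (y : Fin n → ℝ) : ℝ :=
  Real.sqrt (y ⬝ᵥ (M *ᵥ y))

/-- Closed ball of radius `δ` about `x` in the `M`-norm. -/
def Mball {n : ℕ} (M : Matrix (Fin n) (Fin n) ℝ) (x : Fin n → ℝ) (δ : ℝ) :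
    Set (Fin n → ℝ) :=
  {y | Mnorm M (y - x) ≤ δ}

/-- Jacobian matrix of `f : ℝⁿ → ℝⁿ` at `x`. -/
noncomputable def jacobian {n : ℕ} (f : (Fin n → ℝ) → (Fin n → ℝ)) (x : Fin n → ℝ) :
    Matrix (Fin n) (Fin n) ℝ :=
  LinearMap.toMatrix' (fderiv ℝ f x).toLinearMap

/-!
Write `M₀ = C₀ᵀC₀` and `M₁ = C₁ᵀC₁`. Then `‖v‖_{Mᵢ} = ‖Cᵢ v‖₂`, so the substitution
`x = x₀ + C₀⁻¹ u` turns the `M₀`-ball into the Euclidean ball of radius `δ₀`, and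
`g u = C₁ f (x₀ + C₀⁻¹ u)` measures the image in the `M₁`-norm. The derivative of `g` is
`B = C₁ Df C₀⁻¹`, whose Euclidean operator norm is at most `sqrt (λ_max (BᵀB))` by the Rayleigh
bound, and `BᵀB = C₀⁻ᵀ Dfᵀ M₁ Df C₀⁻¹`. The mean value inequality on the convex Euclidean ball
finishes the proof.
-/

open scoped MatrixOrder

section

variable {ι : Type*} [Fintype ι]

lemma Matrix.dotProduct_transpose_mul_self_mulVec (B : Matrix ι ι ℝ) (v : ι → ℝ) :
    v ⬝ᵥ ((Bᵀ * B) *ᵥ v) = (B *ᵥ v) ⬝ᵥ (B *ᵥ v) := by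
  rw [← mulVec_mulVec, dotProduct_mulVec, vecMul_transpose]

lemma EuclideanSpace.norm_toLp_eq_sqrt_dotProduct (v : ι → ℝ) :
    ‖WithLp.toLp 2 v‖ = Real.sqrt (v ⬝ᵥ v) := by
  simp [EuclideanSpace.norm_eq, dotProduct, sq]

variable [DecidableEq ι]

lemma Matrix.IsHermitian.dotProduct_mulVec_le_sSup_spectrum_mul {S : Matrix ι ι ℝ}
    (hS : S.IsHermitian) (w : ι → ℝ) :
    w ⬝ᵥ (S *ᵥ w) ≤ sSup (spectrum ℝ S) * (w ⬝ᵥ w) := by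
  have hle : S ≤ algebraMap ℝ _ (sSup (spectrum ℝ S)) :=
    le_algebraMap_of_spectrum_le (fun _ hx ↦ le_csSup finite_real_spectrum.bddAbove hx)
      hS.isSelfAdjoint
  simpa [sub_mulVec, Algebra.algebraMap_eq_smul_one, smul_mulVec] using
    (Matrix.le_iff.mp hle).dotProduct_mulVec_nonneg w

lemma Matrix.norm_toLp_mulVec_le (B : Matrix ι ι ℝ) (v : ι → ℝ) :
    ‖WithLp.toLp 2 (B *ᵥ v)‖ ≤ Real.sqrt (sSup (spectrum ℝ (Bᵀ * B))) * ‖WithLp.toLp 2 v‖ := by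
  have hBB : (Bᵀ * B).IsHermitian := by simpa using isHermitian_conjTranspose_mul_self B
  rw [EuclideanSpace.norm_toLp_eq_sqrt_dotProduct, EuclideanSpace.norm_toLp_eq_sqrt_dotProduct,
    ← Real.sqrt_mul' _ (show 0 ≤ v ⬝ᵥ v from dotProduct_self_star_nonneg v),
    ← dotProduct_transpose_mul_self_mulVec]
  exact Real.sqrt_le_sqrt (hBB.dotProduct_mulVec_le_sSup_spectrum_mul v)

lemma Matrix.norm_toEuclideanCLM_le (B : Matrix ι ι ℝ) :
    ‖toEuclideanCLM (𝕜 := ℝ) B‖ ≤ Real.sqrt (sSup (spectrum ℝ (Bᵀ * B))) :=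
  ContinuousLinearMap.opNorm_le_bound _ (Real.sqrt_nonneg _) fun u ↦ B.norm_toLp_mulVec_le u.ofLp

lemma Matrix.transpose_mul_self_mul_mul_inv (Q A P : Matrix ι ι ℝ) :
    (Q * A * P⁻¹)ᵀ * (Q * A * P⁻¹) = (Pᵀ)⁻¹ * Aᵀ * (Qᵀ * Q) * A * P⁻¹ := by
  simp only [transpose_mul, transpose_nonsing_inv, Matrix.mul_assoc]

end

lemma Mnorm_transpose_mul_self {n : ℕ} (C : Matrix (Fin n) (Fin n) ℝ) (v : Fin n → ℝ) :
    Mnorm (Cᵀ * C) v = ‖WithLp.toLp 2 (C *ᵥ v)‖ := by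
  rw [Mnorm, dotProduct_transpose_mul_self_mulVec, EuclideanSpace.norm_toLp_eq_sqrt_dotProduct]

lemma jacobian_mulVec {n : ℕ} (f : (Fin n → ℝ) → (Fin n → ℝ)) (x v : Fin n → ℝ) :
    jacobian f x *ᵥ v = fderiv ℝ f x v :=
  LinearMap.toMatrix'_mulVec _ v

lemma hasFDerivAt_toLp_mulVec_comp {n : ℕ} {f : (Fin n → ℝ) → (Fin n → ℝ)}
    (P Q : Matrix (Fin n) (Fin n) ℝ) (a : Fin n → ℝ) {u : EuclideanSpace ℝ (Fin n)}
    (hf : DifferentiableAt ℝ f (a + P *ᵥ u.ofLp)) :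
    HasFDerivAt (fun u : EuclideanSpace ℝ (Fin n) ↦ WithLp.toLp 2 (Q *ᵥ f (a + P *ᵥ u.ofLp)))
      (toEuclideanCLM (𝕜 := ℝ) (Q * jacobian f (a + P *ᵥ u.ofLp) * P)) u := by
  let Tin : EuclideanSpace ℝ (Fin n) →L[ℝ] (Fin n → ℝ) :=
    (toLin' P).toContinuousLinearMap.comp (EuclideanSpace.equiv (Fin n) ℝ).toContinuousLinearMap
  let Tout : (Fin n → ℝ) →L[ℝ] EuclideanSpace ℝ (Fin n) :=
    (EuclideanSpace.equiv (Fin n) ℝ).symm.toContinuousLinearMap.comp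
      (toLin' Q).toContinuousLinearMap
  refine ((Tout.hasFDerivAt.comp _ hf.hasFDerivAt).comp u
    (Tin.hasFDerivAt.const_add a)).congr_fderiv ?_
  ext w i
  simp [Tin, Tout, jacobian_mulVec, PiLp.coe_continuousLinearEquiv, -mulVec_mulVec]

lemma Mnorm_sub_le_of_jacobian {n : ℕ} {f : (Fin n → ℝ) → (Fin n → ℝ)}
    {C₀ C₁ : Matrix (Fin n) (Fin n) ℝ} (hC₀ : IsUnit C₀.det) {x₀ x : Fin n → ℝ} {δ Λ : ℝ}
    (hf : ∀ y ∈ Mball (C₀ᵀ * C₀) x₀ δ, DifferentiableAt ℝ f y)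
    (hΛ : ∀ y ∈ Mball (C₀ᵀ * C₀) x₀ δ,
      Real.sqrt (lambdaMax ((C₀ᵀ)⁻¹ * (jacobian f y)ᵀ * (C₁ᵀ * C₁) * jacobian f y * C₀⁻¹)) ≤ Λ)
    (hx : x ∈ Mball (C₀ᵀ * C₀) x₀ δ) :
    Mnorm (C₁ᵀ * C₁) (f x - f x₀) ≤ Λ * Mnorm (C₀ᵀ * C₀) (x - x₀) := by
  set p : EuclideanSpace ℝ (Fin n) → (Fin n → ℝ) := fun u ↦ x₀ + C₀⁻¹ *ᵥ u.ofLp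
  have hp : ∀ u, Mnorm (C₀ᵀ * C₀) (p u - x₀) = ‖u‖ := fun u ↦ by
    simp [p, Mnorm_transpose_mul_self, mulVec_mulVec, mul_nonsing_inv _ hC₀]
  have hmaps : ∀ u ∈ Metric.closedBall 0 δ, p u ∈ Mball (C₀ᵀ * C₀) x₀ δ := fun u hu ↦ by
    simpa [Mball, hp] using hu
  have hderiv : ∀ u ∈ Metric.closedBall 0 δ, HasFDerivWithinAt
      (fun u ↦ WithLp.toLp 2 (C₁ *ᵥ f (p u)))
      (toEuclideanCLM (𝕜 := ℝ) (C₁ * jacobian f (p u) * C₀⁻¹)) (Metric.closedBall 0 δ) u :=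
    fun u hu ↦ (hasFDerivAt_toLp_mulVec_comp _ _ _ (hf _ (hmaps u hu))).hasFDerivWithinAt
  have hbound : ∀ u ∈ Metric.closedBall 0 δ,
      ‖toEuclideanCLM (𝕜 := ℝ) (C₁ * jacobian f (p u) * C₀⁻¹)‖ ≤ Λ := fun u hu ↦
    (norm_toEuclideanCLM_le _).trans <| by
      rw [transpose_mul_self_mul_mul_inv]; exact hΛ _ (hmaps u hu)
  set u : EuclideanSpace ℝ (Fin n) := WithLp.toLp 2 (C₀ *ᵥ (x - x₀))
  have hpu : p u = x := by simp [p, u, mulVec_mulVec, nonsing_inv_mul _ hC₀]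
  have hδ : 0 ≤ δ := (Real.sqrt_nonneg _).trans hx
  have hu : u ∈ Metric.closedBall 0 δ := by
    rw [Metric.mem_closedBall, dist_zero_right, ← Mnorm_transpose_mul_self]
    exact hx
  have hmvt := (convex_closedBall 0 δ).norm_image_sub_le_of_norm_hasFDerivWithin_le hderiv hbound
    (Metric.mem_closedBall_self hδ) hu
  have hp0 : p 0 = x₀ := by simp [p]
  simp only [hpu, hp0, sub_zero] at hmvt
  rwa [Mnorm_transpose_mul_self, Mnorm_transpose_mul_self, mulVec_sub, WithLp.toLp_sub]

theorem ball_propagation_general {n : ℕ} (M₀ M₁ C₀ C₁ : Matrix (Fin n) (Fin n) ℝ)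
    (hC₀ : IsUnit C₀.det)
    (hCM₀ : C₀ᵀ * C₀ = M₀) (hCM₁ : C₁ᵀ * C₁ = M₁)
    (f : (Fin n → ℝ) → (Fin n → ℝ)) (hf : ContDiff ℝ 1 f)
    (x₀ : Fin n → ℝ) (δ₀ : ℝ)
    (D : Set (Matrix (Fin n) (Fin n) ℝ))
    (hD : ∀ x ∈ Mball M₀ x₀ δ₀, jacobian f x ∈ D)
    (Λ : ℝ)
    (hΛ : ∀ A ∈ D, Real.sqrt (lambdaMax ((C₀ᵀ)⁻¹ * Aᵀ * M₁ * A * C₀⁻¹)) ≤ Λ) :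
    ∀ x ∈ Mball M₀ x₀ δ₀, f x ∈ Mball M₁ (f x₀) (Λ * δ₀) := by
  intro x hx
  subst hCM₀ hCM₁
  have hJ : ∀ y ∈ Mball (C₀ᵀ * C₀) x₀ δ₀, Real.sqrt (lambdaMax
      ((C₀ᵀ)⁻¹ * (jacobian f y)ᵀ * (C₁ᵀ * C₁) * jacobian f y * C₀⁻¹)) ≤ Λ :=
    fun y hy ↦ hΛ _ (hD y hy)
  calc Mnorm (C₁ᵀ * C₁) (f x - f x₀)
      ≤ Λ * Mnorm (C₀ᵀ * C₀) (x - x₀) :=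
        Mnorm_sub_le_of_jacobian hC₀ (fun y _ ↦ hf.differentiable one_ne_zero y) hJ hx
    _ ≤ Λ * δ₀ := mul_le_mul_of_nonneg_left hx ((Real.sqrt_nonneg _).trans (hJ x hx))

/-- one-step ball propagation (Theorem `thmmaindiscrete`).
If all Jacobians over the initial `M₀`-ball lie in `D` and `Λ` bounds the
`M₀/M₁`-stretching factor of every member of `D`, then the image of the ball
is contained in the `M₁`-ball of radius `Λ·δ₀` around `f x₀`. -/
theorem ball_propagation {n : ℕ} (M₀ M₁ C₀ C₁ : Matrix (Fin n) (Fin n) ℝ)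
    (hM₀ : M₀.PosDef) (hM₁ : M₁.PosDef)
    (hC₀ : IsUnit C₀.det) (hC₁ : IsUnit C₁.det)
    (hCM₀ : C₀ᵀ * C₀ = M₀) (hCM₁ : C₁ᵀ * C₁ = M₁)
    (f : (Fin n → ℝ) → (Fin n → ℝ)) (hf : ContDiff ℝ 1 f)
    (x₀ : Fin n → ℝ) (δ₀ : ℝ) (hδ₀ : 0 < δ₀)
    (D : Set (Matrix (Fin n) (Fin n) ℝ))
    (hD : ∀ x ∈ Mball M₀ x₀ δ₀, jacobian f x ∈ D)
    (Λ : ℝ) (hΛpos : 0 < Λ)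
    (hΛ : ∀ A ∈ D, Real.sqrt (lambdaMax ((C₀ᵀ)⁻¹ * Aᵀ * M₁ * A * C₀⁻¹)) ≤ Λ) :
    ∀ x ∈ Mball M₀ x₀ δ₀, f x ∈ Mball M₁ (f x₀) (Λ * δ₀) :=
  ball_propagation_general M₀ M₁ C₀ C₁ hC₀ hCM₀ hCM₁ f hf x₀ δ₀ D hD Λ hΛ
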